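/- arXiv:1207.4865 — 2 statements merged into one kernel-verified Lean document; each statement's English description precedes it below -/
import Mathlib

section
/- Let S(n), n ≥ 1, be random variables satisfying |S(n)| ≤ n almost surely and the moderate deviations asymptotics: for every sequence (u_n) with u_n → ∞ and u_n/√n → 0, ln P(σ^{-1} S(n) > u_n √n) ∼ -u_n²/2 as n → ∞ (ratio tends to 1). Let T be a random variable with values in {0,1,2,...}, independent of (S(n))_n, and define S'(n) = S(n-T) if n ≥ T and S'(n) = 0 otherwise. Then the same moderate deviations asymptotics holds for (S'(n)): ln P(σ^{-1} S'(n) > u_n √n) ∼ -u_n²/2 for every such sequence (u_n). -/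
open MeasureTheory ProbabilityTheory Filter

private lemma sqrt4_tendsto : Tendsto (fun M : ℕ => Real.sqrt (Real.sqrt M)) atTop atTop := by
  rw [tendsto_atTop]
  intro b
  obtain ⟨N, hN⟩ := exists_nat_ge ((max b 0) ^ 4)
  filter_upwards [eventually_ge_atTop N] with M hM
  have h0 : (0:ℝ) ≤ max b 0 := le_max_right _ _
  have hMN : ((max b 0) ^ 4 : ℝ) ≤ (M : ℝ) := hN.trans (Nat.cast_le.2 hM)
  have h1 : ((max b 0) ^ 2 : ℝ) ≤ Real.sqrt M := by
    rw [Real.le_sqrt (by positivity) (by positivity)]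
    calc ((max b 0) ^ 2) ^ 2 = (max b 0) ^ 4 := by ring
      _ ≤ (M : ℝ) := hMN
  have h2 : max b 0 ≤ Real.sqrt (Real.sqrt M) := by
    rw [Real.le_sqrt h0 (Real.sqrt_nonneg _)]
    exact h1
  exact (le_max_left b 0).trans h2

private lemma unifBound {Ω : Type*} {mΩ : MeasurableSpace Ω} (μ : Measure Ω)
    [IsProbabilityMeasure μ] (σ : ℝ) (S : ℕ → Ω → ℝ)
    (hMDP : ∀ u : ℕ → ℝ, Tendsto u atTop atTop →
      Tendsto (fun n : ℕ => u n / Real.sqrt n) atTop (nhds 0) →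
      Tendsto (fun n : ℕ =>
          Real.log ((μ {ω | S n ω / σ > u n * Real.sqrt n}).toReal) / (-(u n)^2 / 2))
        atTop (nhds 1))
    {ε : ℝ} (hε : 0 < ε) (hε1 : ε < 1) :
    ∃ C ρ : ℝ, 0 < ρ ∧ ∀ m : ℕ, ∀ v : ℝ, C ≤ v → v ≤ ρ * Real.sqrt m →
      (μ {ω | S m ω / σ > v * Real.sqrt m}).toReal ≤ Real.exp (-((1-ε) * v^2/2)) := by
  by_contra hcon
  push_neg at hcon
  have hcon' : ∀ j : ℕ, ∃ m : ℕ, ∃ v : ℝ, ((j:ℝ)+1) ≤ v ∧ v ≤ (1/((j:ℝ)+1)) * Real.sqrt m ∧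
      Real.exp (-((1-ε) * v^2/2)) < (μ {ω | S m ω / σ > v * Real.sqrt m}).toReal := by
    intro j
    obtain ⟨m, v, h1, h2, h3⟩ := hcon ((j:ℝ)+1) (1/((j:ℝ)+1)) (by positivity)
    exact ⟨m, v, h1, h2, h3⟩
  choose m v hv1 hv2 hv3 using hcon'
  -- basic facts
  have hvpos : ∀ j, 1 ≤ v j :=
    fun j => le_trans (by exact_mod_cast le_add_of_nonneg_left (Nat.cast_nonneg j)) (hv1 j)
  have hsm : ∀ j : ℕ, ((j:ℝ)+1) * ((j:ℝ)+1) ≤ Real.sqrt (m j) := by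
    intro j
    have h2 := hv2 j
    have h' : ((j:ℝ)+1) * v j ≤ Real.sqrt (m j) := by
      rw [one_div] at h2
      calc ((j:ℝ)+1) * v j ≤ ((j:ℝ)+1) * (((j:ℝ)+1)⁻¹ * Real.sqrt (m j)) := by
            apply mul_le_mul_of_nonneg_left h2 (by positivity)
        _ = Real.sqrt (m j) := by field_simp
    calc ((j:ℝ)+1) * ((j:ℝ)+1) ≤ ((j:ℝ)+1) * v j := by
          apply mul_le_mul_of_nonneg_left (hv1 j) (by positivity)
      _ ≤ Real.sqrt (m j) := h'
  have hm_ge : ∀ j, j + 1 ≤ m j := by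
    intro j
    have h1 : ((j:ℝ)+1) ≤ Real.sqrt (m j) := by
      nlinarith [hsm j, (show (0:ℝ) ≤ (j:ℝ) from Nat.cast_nonneg j)]
    have h2 : ((j:ℝ)+1)^2 ≤ (m j : ℝ) := by
      rw [← Real.le_sqrt (by positivity) (Nat.cast_nonneg _)]
      exact h1
    have h3 : ((j:ℝ)+1) ≤ (m j : ℝ) := by nlinarith [(show (0:ℝ) ≤ (j:ℝ) from Nat.cast_nonneg j)]
    exact_mod_cast h3
  classical
  -- strictly monotone subsequence
  set φ : ℕ → ℕ := fun i => Nat.rec 0 (fun _ prev => m prev + 1) i with hφdef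
  have hφs : ∀ i, φ (i+1) = m (φ i) + 1 := fun i => rfl
  have hφmono : StrictMono φ := by
    apply strictMono_nat_of_lt_succ
    intro i
    rw [hφs]
    have := hm_ge (φ i)
    omega
  have hmono : StrictMono (fun i => m (φ i)) := by
    apply strictMono_nat_of_lt_succ
    intro i
    have h1 := hm_ge (φ (i+1))
    rw [hφs] at h1 ⊢
    omega
  -- the diagonal sequence w
  set w : ℕ → ℝ := fun M => if h : ∃ i, m (φ i) = M then v (φ h.choose)
    else Real.sqrt (Real.sqrt M) with hwdef
  have hweval : ∀ i, w (m (φ i)) = v (φ i) := by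
    intro i
    have hex : ∃ i', m (φ i') = m (φ i) := ⟨i, rfl⟩
    have hch : hex.choose = i := hmono.injective hex.choose_spec
    simp only [hwdef, dif_pos hex, hch]
  have hw1 : Tendsto w atTop atTop := by
    rw [tendsto_atTop]
    intro b
    obtain ⟨i₀, hi₀⟩ := exists_nat_ge b
    filter_upwards [tendsto_atTop.1 sqrt4_tendsto b, eventually_ge_atTop (m (φ i₀))]
      with M hM1 hM2
    by_cases h : ∃ i, m (φ i) = M
    · obtain ⟨i, hi⟩ := h
      have hii : i₀ ≤ i := by
        by_contra hlt
        push_neg at hlt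
        have h5 : m (φ i) < m (φ i₀) := hmono hlt
        omega
      rw [← hi, hweval i]
      have ha : ((i:ℝ)) ≤ (φ i : ℝ) := by exact_mod_cast hφmono.le_apply
      have hb : ((φ i : ℝ) + 1) ≤ v (φ i) := hv1 (φ i)
      have hc : (i₀ : ℝ) ≤ (i : ℝ) := by exact_mod_cast hii
      linarith
    · simp only [hwdef, dif_neg h]
      exact hM1
  have hw2 : Tendsto (fun M : ℕ => w M / Real.sqrt M) atTop (nhds 0) := by
    rw [Metric.tendsto_atTop]
    intro δ hδ
    obtain ⟨i₁, hi₁⟩ := exists_nat_gt (1/δ)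
    obtain ⟨N₂, hN₂⟩ := (tendsto_atTop.1 sqrt4_tendsto (2/δ)).exists_forall_of_atTop
    refine ⟨max (max N₂ (m (φ i₁))) 1, fun M hM => ?_⟩
    have hM2 : N₂ ≤ M := le_trans (le_trans (le_max_left _ _) (le_max_left _ _)) hM
    have hM3 : m (φ i₁) ≤ M := le_trans (le_trans (le_max_right _ _) (le_max_left _ _)) hM
    have hM1 : 1 ≤ M := le_trans (le_max_right _ _) hM
    have hsqM : (0:ℝ) < Real.sqrt M := Real.sqrt_pos.2 (by exact_mod_cast hM1)
    rw [Real.dist_eq, sub_zero]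
    by_cases h : ∃ i, m (φ i) = M
    · obtain ⟨i, hi⟩ := h
      have hii : i₁ ≤ i := by
        by_contra hlt
        push_neg at hlt
        have h5 : m (φ i) < m (φ i₁) := hmono hlt
        omega
      subst hi
      rw [hweval i]
      have hv2' := hv2 (φ i)
      have hvnn : 0 ≤ v (φ i) := le_trans zero_le_one (hvpos (φ i))
      rw [abs_of_nonneg (by positivity)]
      have h1 : v (φ i) / Real.sqrt (m (φ i)) ≤ 1/((φ i : ℝ)+1) := by
        rw [div_le_div_iff₀ hsqM (by positivity)]
        calc v (φ i) * ((φ i : ℝ)+1) = ((φ i : ℝ)+1) * v (φ i) := by ring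
          _ ≤ ((φ i : ℝ)+1) * ((1/((φ i : ℝ)+1)) * Real.sqrt (m (φ i))) := by
              apply mul_le_mul_of_nonneg_left hv2' (by positivity)
          _ = 1 * Real.sqrt (m (φ i)) := by field_simp
      have h2 : 1/((φ i : ℝ)+1) < δ := by
        have hc0 : (i₁:ℝ) ≤ (i:ℝ) := by exact_mod_cast hii
        have hc0' : (i:ℝ) ≤ (φ i : ℝ) := by exact_mod_cast hφmono.le_apply
        rw [div_lt_iff₀ (by positivity)]
        rw [div_lt_iff₀ hδ] at hi₁
        nlinarith
      linarith
    · simp only [hwdef, dif_neg h]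
      have hssM : (0:ℝ) < Real.sqrt (Real.sqrt M) := Real.sqrt_pos.2 hsqM
      have hkey : Real.sqrt (Real.sqrt M) / Real.sqrt M = 1 / Real.sqrt (Real.sqrt M) := by
        rw [div_eq_div_iff hsqM.ne' hssM.ne', one_mul, Real.mul_self_sqrt (Real.sqrt_nonneg _)]
      rw [hkey, abs_of_nonneg (by positivity), div_lt_iff₀ hssM]
      have h2 := hN₂ M hM2
      rw [div_le_iff₀ hδ] at h2
      nlinarith
  -- apply hMDP and derive contradiction
  have ht := (hMDP w hw1 hw2).comp (hmono.tendsto_atTop)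
  have hev : ∀ᶠ i in atTop, (1 - ε : ℝ) <
      Real.log ((μ {ω | S (m (φ i)) ω / σ > w (m (φ i)) * Real.sqrt (m (φ i))}).toReal) /
        (-(w (m (φ i)))^2 / 2) := ht.eventually (eventually_gt_nhds (by linarith))
  obtain ⟨i, hi⟩ := hev.exists
  set j := φ i with hj
  rw [hweval i] at hi
  have hvj : 1 ≤ v j := hvpos j
  have hD : (-(v j)^2 / 2 : ℝ) < 0 := by nlinarith
  set p := (μ {ω | S (m j) ω / σ > v j * Real.sqrt (m j)}).toReal with hp
  have hppos : 0 < p := lt_trans (Real.exp_pos _) (hv3 j)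
  have hlogp : Real.log p < (1-ε) * (-(v j)^2 / 2) := by
    have := (lt_div_iff_of_neg hD).1 hi
    linarith
  have hple : p < Real.exp (-((1-ε) * (v j)^2/2)) := by
    rw [← Real.log_lt_iff_lt_exp hppos]
    calc Real.log p < (1-ε) * (-(v j)^2 / 2) := hlogp
      _ = -((1-ε) * (v j)^2/2) := by ring
  exact absurd (hv3 j) (not_lt.2 hple.le)

set_option maxHeartbeats 1000000 in
/-- Lemma 2.9: if `S n` satisfies the moderate deviations asymptotics and `|S n| ≤ n` a.s.,
and `T` is a nonnegative integer random variable independent of the family `(S n)`, then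
the delayed variables `S' n = S (n - T) 1_{n ≥ T}` satisfy the same asymptotics. -/
theorem stmt_2 {Ω : Type*} {mΩ : MeasurableSpace Ω} (μ : Measure Ω) [IsProbabilityMeasure μ]
    (σ : ℝ) (hσ : 0 < σ)
    (S : ℕ → Ω → ℝ) (hSmeas : ∀ n, Measurable (S n))
    (hSbdd : ∀ n : ℕ, ∀ᵐ ω ∂μ, |S n ω| ≤ (n : ℝ))
    (hMDP : ∀ u : ℕ → ℝ, Filter.Tendsto u Filter.atTop Filter.atTop →
      Filter.Tendsto (fun n : ℕ => u n / Real.sqrt n) Filter.atTop (nhds 0) →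
      Filter.Tendsto (fun n : ℕ =>
          Real.log ((μ {ω | S n ω / σ > u n * Real.sqrt n}).toReal) / (-(u n)^2 / 2))
        Filter.atTop (nhds 1))
    (T : Ω → ℕ) (hTmeas : Measurable T)
    (hTindep : IndepFun T (fun ω (n : ℕ) => S n ω) μ)
    (S' : ℕ → Ω → ℝ)
    (hS' : ∀ n ω, S' n ω = if T ω ≤ n then S (n - T ω) ω else 0) :
    ∀ u : ℕ → ℝ, Filter.Tendsto u Filter.atTop Filter.atTop →
      Filter.Tendsto (fun n : ℕ => u n / Real.sqrt n) Filter.atTop (nhds 0) →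
      Filter.Tendsto (fun n : ℕ =>
          Real.log ((μ {ω | S' n ω / σ > u n * Real.sqrt n}).toReal) / (-(u n)^2 / 2))
        Filter.atTop (nhds 1) := by
  intro u hu1 hu2
  classical
  -- an atom of T
  obtain ⟨k₀, hk₀⟩ : ∃ k : ℕ, μ (T ⁻¹' {k}) ≠ 0 := by
    by_contra h
    push_neg at h
    have h0 : μ (⋃ k : ℕ, T ⁻¹' {k}) = 0 := measure_iUnion_null h
    have huniv : (⋃ k : ℕ, T ⁻¹' {k}) = Set.univ := by ext ω; simp
    rw [huniv, measure_univ] at h0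
    exact one_ne_zero h0
  have ht₀top : μ (T ⁻¹' {k₀}) ≠ ⊤ := measure_ne_top μ _
  have ht₀pos : 0 < (μ (T ⁻¹' {k₀})).toReal := ENNReal.toReal_pos hk₀ ht₀top
  -- independence
  have hindep : ∀ (j k : ℕ) (c : ℝ),
      μ (T ⁻¹' {k} ∩ {ω | S j ω / σ > c}) = μ (T ⁻¹' {k}) * μ {ω | S j ω / σ > c} := by
    intro j k c
    have hB : MeasurableSet {f : ℕ → ℝ | f j / σ > c} :=
      measurableSet_lt measurable_const (by fun_prop)
    exact hTindep.measure_inter_preimage_eq_mul _ _ (measurableSet_singleton k) hB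
  -- the shifted sequence
  set v : ℕ → ℝ := fun m => if m = 0 then 1
    else u (m + k₀) * Real.sqrt ((m + k₀ : ℕ) : ℝ) / Real.sqrt m with hvdef
  have hvmul : ∀ m : ℕ, 1 ≤ m →
      v m * Real.sqrt m = u (m + k₀) * Real.sqrt ((m + k₀ : ℕ) : ℝ) := by
    intro m hm
    have h0 : Real.sqrt m ≠ 0 := Real.sqrt_ne_zero'.2 (by exact_mod_cast hm)
    simp only [hvdef]
    rw [if_neg (by omega)]
    field_simp
  have huk : Tendsto (fun m : ℕ => u (m + k₀)) atTop atTop := hu1.comp (tendsto_add_atTop_nat k₀)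
  have hvev : ∀ᶠ m : ℕ in atTop, u (m + k₀) ≤ v m := by
    filter_upwards [eventually_ge_atTop 1, (tendsto_add_atTop_nat k₀).eventually
      (hu1.eventually_ge_atTop 0)] with m hm hum
    simp only [hvdef]
    rw [if_neg (by omega)]
    have hs : (0:ℝ) < Real.sqrt m := Real.sqrt_pos.2 (by exact_mod_cast hm)
    rw [le_div_iff₀ hs]
    have : Real.sqrt (m:ℝ) ≤ Real.sqrt ((m + k₀ : ℕ) : ℝ) :=
      Real.sqrt_le_sqrt (by push_cast; linarith)
    calc u (m + k₀) * Real.sqrt (m:ℝ) ≤ u (m + k₀) * Real.sqrt ((m + k₀ : ℕ) : ℝ) :=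
          mul_le_mul_of_nonneg_left this hum
      _ = _ := rfl
  have hv1 : Tendsto v atTop atTop := tendsto_atTop_mono' atTop hvev huk
  have hv2 : Tendsto (fun m : ℕ => v m / Real.sqrt m) atTop (nhds 0) := by
    have hq : Tendsto (fun m : ℕ =>
        ((1:ℝ)+k₀) * (u (m + k₀) / Real.sqrt ((m + k₀ : ℕ) : ℝ))) atTop (nhds 0) := by
      have h := hu2.comp (tendsto_add_atTop_nat k₀)
      simpa using h.const_mul ((1:ℝ)+k₀)
    apply squeeze_zero' ?_ ?_ hq
    · filter_upwards [eventually_ge_atTop 1, (tendsto_add_atTop_nat k₀).eventually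
        (hu1.eventually_ge_atTop 0)] with m hm hum
      have hs : (0:ℝ) < Real.sqrt m := Real.sqrt_pos.2 (by exact_mod_cast hm)
      have : 0 ≤ v m := by
        simp only [hvdef]; rw [if_neg (by omega)]; positivity
      positivity
    · filter_upwards [eventually_ge_atTop 1, (tendsto_add_atTop_nat k₀).eventually
        (hu1.eventually_ge_atTop 0)] with m hm hum
      have hm' : (1:ℝ) ≤ (m:ℝ) := by exact_mod_cast hm
      have hs : (0:ℝ) < Real.sqrt m := Real.sqrt_pos.2 (by linarith)
      have hs' : (0:ℝ) < Real.sqrt ((m + k₀ : ℕ) : ℝ) := by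
        apply Real.sqrt_pos.2; push_cast; linarith
      simp only [hvdef]
      rw [if_neg (by omega)]
      rw [div_div, Real.mul_self_sqrt (by linarith), mul_div_assoc']
      rw [div_le_div_iff₀ (by linarith) hs']
      have hss : Real.sqrt ((m + k₀ : ℕ) : ℝ) * Real.sqrt ((m + k₀ : ℕ) : ℝ)
          = ((m + k₀ : ℕ) : ℝ) := Real.mul_self_sqrt (by positivity)
      calc u (m + k₀) * Real.sqrt ((m + k₀ : ℕ) : ℝ) * Real.sqrt ((m + k₀ : ℕ) : ℝ)
          = u (m + k₀) * ((m + k₀ : ℕ) : ℝ) := by rw [mul_assoc, hss]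
        _ ≤ ((1:ℝ)+k₀) * u (m + k₀) * (m:ℝ) := by
            push_cast
            nlinarith [mul_nonneg hum (mul_nonneg (show (0:ℝ) ≤ (k₀:ℝ) from Nat.cast_nonneg _)
              (show (0:ℝ) ≤ (m:ℝ) - 1 by linarith))]
  -- moderate deviations for the shifted variables
  have hbase := (hMDP v hv1 hv2).comp (tendsto_sub_atTop_nat k₀)
  have hDD : Tendsto (fun n : ℕ => (-(v (n - k₀))^2/2) / (-(u n)^2/2)) atTop (nhds 1) := by
    have htail : Tendsto (fun n : ℕ => (k₀:ℝ)/((n - k₀ : ℕ) : ℝ)) atTop (nhds 0) :=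
      (tendsto_const_div_atTop_nhds_zero_nat (k₀:ℝ)).comp (tendsto_sub_atTop_nat k₀)
    have h1 : Tendsto (fun n : ℕ => 1 + (k₀:ℝ)/((n - k₀ : ℕ) : ℝ)) atTop (nhds 1) := by
      simpa using (tendsto_const_nhds (x := (1:ℝ)) (f := atTop)).add htail
    apply h1.congr'
    filter_upwards [eventually_ge_atTop (k₀+1), hu1.eventually_ge_atTop 1] with n hn hun
    have hm1 : 1 ≤ n - k₀ := by omega
    have hmpos : (0:ℝ) < ((n - k₀ : ℕ) : ℝ) := by exact_mod_cast hm1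
    have hveq := hvmul (n - k₀) hm1
    rw [Nat.sub_add_cancel (by omega)] at hveq
    have hsq : (0:ℝ) < Real.sqrt ((n - k₀ : ℕ) : ℝ) := Real.sqrt_pos.2 hmpos
    have hv2eq : (v (n - k₀))^2 = (u n)^2 * (n:ℝ) / ((n - k₀ : ℕ) : ℝ) := by
      have h2 : v (n - k₀) = u n * Real.sqrt (n:ℝ) / Real.sqrt ((n - k₀ : ℕ) : ℝ) := by
        rw [eq_div_iff hsq.ne']; exact hveq
      rw [h2]
      rw [div_pow, mul_pow, Real.sq_sqrt (by positivity), Real.sq_sqrt hmpos.le]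
    have hcast : ((n - k₀ : ℕ) : ℝ) = (n:ℝ) - (k₀:ℝ) := by
      push_cast [Nat.cast_sub (by omega : k₀ ≤ n)]; ring
    rw [hv2eq, hcast]
    have hne1 : (n:ℝ) - (k₀:ℝ) ≠ 0 := by rw [← hcast]; exact hmpos.ne'
    have hne2 : u n ≠ 0 := by linarith
    field_simp
    ring
  have hL : Tendsto (fun n : ℕ =>
      Real.log ((μ {ω | S (n - k₀) ω / σ > u n * Real.sqrt n}).toReal) / (-(u n)^2/2))
      atTop (nhds 1) := by
    have hmul := hbase.mul hDD
    rw [one_mul] at hmul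
    apply hmul.congr'
    filter_upwards [eventually_ge_atTop (k₀+1), hu1.eventually_ge_atTop 1,
      (tendsto_sub_atTop_nat k₀).eventually hvev] with n hn hun hvn
    have hm1 : 1 ≤ n - k₀ := by omega
    have hveq := hvmul (n - k₀) hm1
    rw [Nat.sub_add_cancel (by omega)] at hveq
    have hvpos : 1 ≤ v (n - k₀) := by
      rw [Nat.sub_add_cancel (by omega)] at hvn; linarith
    have hb : (-(v (n - k₀))^2/2 : ℝ) ≠ 0 := by nlinarith
    have hc : (-(u n)^2/2 : ℝ) ≠ 0 := by nlinarith
    simp only [Function.comp]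
    rw [hveq]
    field_simp
  -- positivity of the shifted probability
  have hLpos : ∀ᶠ n in atTop, 0 < (μ {ω | S (n - k₀) ω / σ > u n * Real.sqrt n}).toReal := by
    filter_upwards [hL.eventually (eventually_gt_nhds (by norm_num : (1/2:ℝ) < 1)),
      hu1.eventually_ge_atTop 1] with n h1 h2
    by_contra hle
    push_neg at hle
    have h0 : (μ {ω | S (n - k₀) ω / σ > u n * Real.sqrt n}).toReal = 0 :=
      le_antisymm hle ENNReal.toReal_nonneg
    rw [h0, Real.log_zero, zero_div] at h1
    linarith
  -- lower bound for the delayed probability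
  have hQlow : ∀ᶠ n in atTop, (μ (T ⁻¹' {k₀})).toReal *
      (μ {ω | S (n - k₀) ω / σ > u n * Real.sqrt n}).toReal ≤
      (μ {ω | S' n ω / σ > u n * Real.sqrt n}).toReal := by
    filter_upwards [eventually_ge_atTop k₀] with n hn
    have hsub : T ⁻¹' {k₀} ∩ {ω | S (n - k₀) ω / σ > u n * Real.sqrt n} ⊆
        {ω | S' n ω / σ > u n * Real.sqrt n} := by
      rintro ω ⟨hT, hS⟩
      have hTω : T ω = k₀ := hT
      simp only [Set.mem_setOf_eq] at hS ⊢
      rw [hS' n ω, if_pos (by omega : T ω ≤ n), hTω]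
      exact hS
    have h1 : μ (T ⁻¹' {k₀}) * μ {ω | S (n - k₀) ω / σ > u n * Real.sqrt n} ≤
        μ {ω | S' n ω / σ > u n * Real.sqrt n} := by
      rw [← hindep (n - k₀) k₀ (u n * Real.sqrt n)]
      exact measure_mono hsub
    calc (μ (T ⁻¹' {k₀})).toReal * (μ {ω | S (n - k₀) ω / σ > u n * Real.sqrt n}).toReal
        = (μ (T ⁻¹' {k₀}) * μ {ω | S (n - k₀) ω / σ > u n * Real.sqrt n}).toReal := by
          rw [ENNReal.toReal_mul]
      _ ≤ _ := ENNReal.toReal_mono (measure_ne_top μ _) h1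
  -- constant over denominator tends to zero
  have husq : Tendsto (fun n : ℕ => (u n)^2) atTop atTop :=
    (hu1.atTop_mul_atTop₀ hu1).congr (fun n => (pow_two (u n)).symm)
  have htz : Tendsto (fun n : ℕ =>
      Real.log ((μ (T ⁻¹' {k₀})).toReal) / (-(u n)^2/2)) atTop (nhds 0) := by
    have h0 : Tendsto (fun n : ℕ =>
        (-2 * Real.log ((μ (T ⁻¹' {k₀})).toReal)) * ((u n)^2)⁻¹) atTop (nhds 0) := by
      simpa using (tendsto_inv_atTop_zero.comp husq).const_mul
        (-2 * Real.log ((μ (T ⁻¹' {k₀})).toReal))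
    apply h0.congr'
    filter_upwards [hu1.eventually_ge_atTop 1] with n hun
    have : (u n)^2 ≠ 0 := by nlinarith
    field_simp
  have hsum : Tendsto (fun n : ℕ =>
      Real.log ((μ (T ⁻¹' {k₀})).toReal) / (-(u n)^2/2) +
      Real.log ((μ {ω | S (n - k₀) ω / σ > u n * Real.sqrt n}).toReal) / (-(u n)^2/2))
      atTop (nhds 1) := by
    simpa using htz.add hL
  -- final ε-argument
  rw [Metric.tendsto_nhds]
  intro ε' hε'
  set ε := min (ε'/2) (1/2) with hεdef
  have hε : 0 < ε := lt_min (by linarith) (by norm_num)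
  have hε1 : ε < 1 := lt_of_le_of_lt (min_le_right _ _) (by norm_num)
  have hεε' : ε < ε' := lt_of_le_of_lt (min_le_left _ _) (by linarith)
  obtain ⟨C, ρ, hρ, hU⟩ := unifBound μ σ S hMDP hε hε1
  have hupper : ∀ᶠ n : ℕ in atTop, μ {ω | S' n ω / σ > u n * Real.sqrt n} ≤
      ENNReal.ofReal (Real.exp (-((1-ε) * (u n)^2/2))) := by
    filter_upwards [hu1.eventually_ge_atTop (max C 1),
      hu2.eventually (eventually_lt_nhds (by positivity : (0:ℝ) < σ * ρ^2)),
      eventually_ge_atTop 1] with n hC hρσ hn1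
    have huC : C ≤ u n := le_trans (le_max_left _ _) hC
    have hu1n : 1 ≤ u n := le_trans (le_max_right _ _) hC
    have hsqn : (0:ℝ) < Real.sqrt n := Real.sqrt_pos.2 (by exact_mod_cast hn1)
    have hincl : {ω | S' n ω / σ > u n * Real.sqrt n} ⊆
        ⋃ k ∈ Finset.range (n+1), (T ⁻¹' {k} ∩ {ω | S (n - k) ω / σ > u n * Real.sqrt n}) := by
      intro ω hω
      simp only [Set.mem_setOf_eq] at hω
      by_cases hT : T ω ≤ n
      · apply Set.mem_biUnion (Finset.mem_range.2 (by omega : T ω < n + 1))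
        refine ⟨rfl, ?_⟩
        simp only [Set.mem_setOf_eq]
        rw [hS' n ω, if_pos hT] at hω
        exact hω
      · exfalso
        rw [hS' n ω, if_neg hT, zero_div] at hω
        nlinarith
    calc μ {ω | S' n ω / σ > u n * Real.sqrt n}
        ≤ μ (⋃ k ∈ Finset.range (n+1),
            (T ⁻¹' {k} ∩ {ω | S (n - k) ω / σ > u n * Real.sqrt n})) := measure_mono hincl
      _ ≤ ∑ k ∈ Finset.range (n+1),
            μ (T ⁻¹' {k} ∩ {ω | S (n - k) ω / σ > u n * Real.sqrt n}) :=
          measure_biUnion_finset_le _ _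
      _ ≤ ∑ k ∈ Finset.range (n+1),
            μ (T ⁻¹' {k}) * ENNReal.ofReal (Real.exp (-((1-ε) * (u n)^2/2))) := by
          apply Finset.sum_le_sum
          intro k _
          rw [hindep (n - k) k (u n * Real.sqrt n)]
          apply mul_le_mul_right
          by_cases hcase : ((n - k : ℕ) : ℝ) ≤ σ * (u n * Real.sqrt n)
          · have hae := hSbdd (n - k)
            rw [ae_iff] at hae
            have hnull : μ {ω | S (n - k) ω / σ > u n * Real.sqrt n} = 0 := by
              apply measure_mono_null ?_ hae
              intro ω hω
              simp only [Set.mem_setOf_eq] at hω ⊢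
              intro habs
              have h1 : S (n - k) ω ≤ ((n - k : ℕ) : ℝ) := le_trans (le_abs_self _) habs
              have h2 : σ * (u n * Real.sqrt n) < S (n - k) ω := by
                rw [gt_iff_lt, lt_div_iff₀ hσ] at hω
                linarith [hω]
              linarith
            rw [hnull]
            exact zero_le
          · push_neg at hcase
            have hjn : n - k ≤ n := Nat.sub_le n k
            have hρj : u n ≤ ρ * Real.sqrt ((n - k : ℕ) : ℝ) := by
              have h2 : u n < σ * ρ^2 * Real.sqrt n := by
                rw [div_lt_iff₀ hsqn] at hρσ
                linarith
              have h1 : u n * u n ≤ ρ^2 * ((n - k : ℕ) : ℝ) := by nlinarith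
              have h3 : u n = Real.sqrt (u n * u n) :=
                (Real.sqrt_mul_self (by linarith)).symm
              rw [h3]
              calc Real.sqrt (u n * u n) ≤ Real.sqrt (ρ^2 * ((n - k : ℕ) : ℝ)) :=
                    Real.sqrt_le_sqrt h1
                _ = ρ * Real.sqrt ((n - k : ℕ) : ℝ) := by
                    rw [Real.sqrt_mul (by positivity), Real.sqrt_sq hρ.le]
            have hUb := hU (n - k) (u n) huC hρj
            have hsub2 : {ω | S (n - k) ω / σ > u n * Real.sqrt n} ⊆
                {ω | S (n - k) ω / σ > u n * Real.sqrt ((n - k : ℕ) : ℝ)} := by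
              intro ω hω
              simp only [Set.mem_setOf_eq] at hω ⊢
              have : u n * Real.sqrt ((n - k : ℕ) : ℝ) ≤ u n * Real.sqrt n :=
                mul_le_mul_of_nonneg_left (Real.sqrt_le_sqrt (by exact_mod_cast hjn))
                  (by linarith)
              linarith
            calc μ {ω | S (n - k) ω / σ > u n * Real.sqrt n}
                ≤ μ {ω | S (n - k) ω / σ > u n * Real.sqrt ((n - k : ℕ) : ℝ)} :=
                  measure_mono hsub2
              _ ≤ ENNReal.ofReal (Real.exp (-((1-ε) * (u n)^2/2))) :=
                  (ENNReal.le_ofReal_iff_toReal_le (measure_ne_top μ _)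
                    (Real.exp_nonneg _)).2 hUb
      _ = (∑ k ∈ Finset.range (n+1), μ (T ⁻¹' {k})) *
            ENNReal.ofReal (Real.exp (-((1-ε) * (u n)^2/2))) := (Finset.sum_mul _ _ _).symm
      _ ≤ 1 * ENNReal.ofReal (Real.exp (-((1-ε) * (u n)^2/2))) := by
          apply mul_le_mul_left
          have heq : ∑ k ∈ Finset.range (n+1), μ (T ⁻¹' {k}) =
              μ (⋃ k ∈ Finset.range (n+1), T ⁻¹' {k}) := by
            rw [measure_biUnion_finset]
            · intro a _ b _ hab
              apply Set.disjoint_left.2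
              intro ω h1 h2
              exact hab (by rw [← h1, ← h2])
            · exact fun k _ => hTmeas (measurableSet_singleton k)
          rw [heq]
          exact prob_le_one
      _ = ENNReal.ofReal (Real.exp (-((1-ε) * (u n)^2/2))) := one_mul _
  -- put everything together
  filter_upwards [hQlow, hupper, hLpos, hu1.eventually_ge_atTop 1,
    hsum.eventually (eventually_lt_nhds (by linarith : (1:ℝ) < 1 + ε))] with n hlow hup hLp hun hsumn
  have hD : (-(u n)^2/2 : ℝ) < 0 := by nlinarith
  have hQpos : 0 < (μ {ω | S' n ω / σ > u n * Real.sqrt n}).toReal :=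
    lt_of_lt_of_le (by positivity) hlow
  have hQle : (μ {ω | S' n ω / σ > u n * Real.sqrt n}).toReal ≤
      Real.exp (-((1-ε) * (u n)^2/2)) := by
    have := ENNReal.toReal_mono (by simp) hup
    rwa [ENNReal.toReal_ofReal (Real.exp_nonneg _)] at this
  have hlogup : Real.log ((μ {ω | S' n ω / σ > u n * Real.sqrt n}).toReal) ≤
      -((1-ε) * (u n)^2/2) := (Real.log_le_iff_le_exp hQpos).2 hQle
  have hratio1 : 1 - ε ≤ Real.log ((μ {ω | S' n ω / σ > u n * Real.sqrt n}).toReal) /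
      (-(u n)^2/2) := by
    rw [le_div_iff_of_neg hD]
    calc Real.log ((μ {ω | S' n ω / σ > u n * Real.sqrt n}).toReal)
        ≤ -((1-ε) * (u n)^2/2) := hlogup
      _ = (1-ε) * (-(u n)^2/2) := by ring
  have hloglow : Real.log ((μ (T ⁻¹' {k₀})).toReal) +
      Real.log ((μ {ω | S (n - k₀) ω / σ > u n * Real.sqrt n}).toReal) ≤
      Real.log ((μ {ω | S' n ω / σ > u n * Real.sqrt n}).toReal) := by
    rw [← Real.log_mul (by positivity) (by positivity)]
    exact Real.log_le_log (by positivity) hlow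
  have hratio2 : Real.log ((μ {ω | S' n ω / σ > u n * Real.sqrt n}).toReal) /
      (-(u n)^2/2) < 1 + ε := by
    have h1 := div_le_div_of_nonpos_of_le hD.le hloglow
    rw [add_div] at h1
    exact lt_of_le_of_lt h1 hsumn
  rw [Real.dist_eq]
  have habs : |Real.log ((μ {ω | S' n ω / σ > u n * Real.sqrt n}).toReal) /
      (-(u n)^2/2) - 1| ≤ ε := abs_le.2 ⟨by linarith, by linarith⟩
  linarith
end

section
/- Let 0 < α < 1 and define μ_{n} for n ≥ 2 by the relations n μ_{n+1} + (n+1) μ_{n+2} + (n+2) μ_{n+3} + ... = exp(-n^α) for all n = 1,2,.... Then ln μ_n ∼ -n^α as n → ∞, i.e. (ln μ_n)/(-n^α) → 1. -/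
open Real Filter Topology

/-!
Subtracting the relations for `n` and `n + 1` gives `n μ_{n+1} = e^{-n^α} - e^{-(n+1)^α}`.
By concavity `(n+1)^α - n^α ≥ α / (n+1)`, and `e^{-a} - e^{-b} ≥ (b - a) e^{-b}`, so this
difference lies between `α (n+1)⁻¹ e^{-(n+1)^α}` and `e^{-n^α}`. Hence `-log μ_{n+1}` lies between
`n^α` and `(n+1)^α + O(log n)`, and both bounds are `∼ (n+1)^α`.
-/

theorem tsum_nat_add_sub_tsum_nat_add_succ {G : Type*} [AddCommGroup G] [TopologicalSpace G]
    [IsTopologicalAddGroup G] [T2Space G] {a : ℕ → G} {n : ℕ}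
    (ha : Summable fun j ↦ a (n + j)) :
    ∑' j, a (n + j) - ∑' j, a (n + 1 + j) = a n := by
  rw [ha.tsum_eq_zero_add]
  simp only [add_zero, Nat.add_right_comm, Nat.add_assoc, add_sub_cancel_right]

theorem mul_exp_neg_le_exp_neg_sub_exp_neg (a b : ℝ) :
    (b - a) * exp (-b) ≤ exp (-a) - exp (-b) := by
  have h := mul_le_mul_of_nonneg_right (add_one_le_exp (b - a)) (exp_pos (-b)).le
  rw [← exp_add, show b - a + -b = -a by ring] at h
  linarith

theorem mul_rpow_sub_one_le_rpow_add_one_sub_rpow {x α : ℝ} (hx : 0 ≤ x) (hα0 : 0 ≤ α)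
    (hα1 : α ≤ 1) : α * (x + 1) ^ (α - 1) ≤ (x + 1) ^ α - x ^ α := by
  have hy : 0 < x + 1 := by linarith
  have hbern := rpow_one_add_le_one_add_mul_self (s := -(x + 1)⁻¹)
    (by rw [neg_le_neg_iff]; exact inv_le_one_of_one_le₀ (by linarith)) hα0 hα1
  rw [show 1 + -(x + 1)⁻¹ = x / (x + 1) by field_simp; ring, div_rpow hx hy.le,
    div_le_iff₀ (rpow_pos_of_pos hy α)] at hbern
  have : (1 + α * -(x + 1)⁻¹) * (x + 1) ^ α = (x + 1) ^ α - α * (x + 1) ^ (α - 1) := by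
    rw [rpow_sub_one hy.ne']
    field_simp
    ring
  linarith

theorem rpow_le_neg_log_le_of_mul_eq {α x y : ℝ} (hα0 : 0 < α) (hα1 : α ≤ 1) (hx : 1 ≤ x)
    (hy : x * y = exp (-x ^ α) - exp (-(x + 1) ^ α)) :
    x ^ α ≤ -log y ∧ -log y ≤ (x + 1) ^ α + 2 * log (x + 1) - log α := by
  have hx0 : 0 < x := by linarith
  have hx1 : 0 < x + 1 := by linarith
  have hgap : α / (x + 1) ≤ (x + 1) ^ α - x ^ α := calc
    α / (x + 1) = α * (x + 1) ^ (-1 : ℝ) := by rw [rpow_neg_one, div_eq_mul_inv]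
    _ ≤ α * (x + 1) ^ (α - 1) := by gcongr <;> linarith
    _ ≤ _ := mul_rpow_sub_one_le_rpow_add_one_sub_rpow hx0.le hα0.le hα1
  have hlower : α / (x + 1) ^ 2 * exp (-(x + 1) ^ α) ≤ y := by
    have h := (mul_le_mul_of_nonneg_right hgap (exp_pos _).le).trans
      (mul_exp_neg_le_exp_neg_sub_exp_neg (x ^ α) ((x + 1) ^ α))
    rw [← hy] at h
    calc α / (x + 1) ^ 2 * exp (-(x + 1) ^ α)
        ≤ α / (x + 1) * exp (-(x + 1) ^ α) / x := by
          rw [div_mul_eq_mul_div, div_mul_eq_mul_div, div_div]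
          gcongr
          nlinarith
      _ ≤ y := by rw [div_le_iff₀ hx0]; linarith
  have hypos : 0 < y := lt_of_lt_of_le (by positivity) hlower
  have hupper : y ≤ exp (-x ^ α) := by
    nlinarith [exp_pos (-(x + 1) ^ α), exp_pos (-x ^ α)]
  constructor
  · have := log_le_log hypos hupper
    rw [log_exp] at this
    linarith
  · have := log_le_log (by positivity) hlower
    rw [log_mul (by positivity) (exp_pos _).ne', log_div hα0.ne' (by positivity), log_exp,
      log_pow] at this
    push_cast at this
    linarith

theorem tendsto_natCast_rpow_div_add_one_rpow (α : ℝ) :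
    Tendsto (fun n : ℕ ↦ (n : ℝ) ^ α / ((n : ℝ) + 1) ^ α) atTop (𝓝 1) := by
  have h := (tendsto_natCast_div_add_atTop (1 : ℝ)).rpow_const (p := α) (Or.inl one_ne_zero)
  rw [one_rpow] at h
  exact h.congr fun n ↦ div_rpow n.cast_nonneg (by positivity) α

theorem tendsto_rpow_add_log_div_rpow {α : ℝ} (hα : 0 < α) (c d : ℝ) :
    Tendsto (fun x : ℝ ↦ (x ^ α + c * log x + d) / x ^ α) atTop (𝓝 1) := by
  have hlog := (isLittleO_log_rpow_atTop hα).tendsto_div_nhds_zero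
  have hinv := (tendsto_rpow_atTop hα).inv_tendsto_atTop
  have := (tendsto_const_nhds (x := (1 : ℝ))).add ((hlog.const_mul c).add (hinv.const_mul d))
  rw [mul_zero, mul_zero, add_zero, add_zero] at this
  refine this.congr' ?_
  filter_upwards [eventually_gt_atTop 0] with x hx
  have := (rpow_pos_of_pos hx α).ne'
  simp only [Pi.inv_apply]
  field_simp
  ring

theorem stmt_7_general (α : ℝ) (hα0 : 0 < α) (hα1 : α < 1) (μ : ℕ → ℝ)
    (hsum : ∀ n : ℕ, 1 ≤ n → Summable (fun j : ℕ => ((n + j : ℕ) : ℝ) * μ (n + j + 1)))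
    (hrel : ∀ n : ℕ, 1 ≤ n →
      ∑' j : ℕ, ((n + j : ℕ) : ℝ) * μ (n + j + 1) = Real.exp (-(n : ℝ) ^ α)) :
    Filter.Tendsto (fun n : ℕ => Real.log (μ n) / (-(n : ℝ) ^ α))
      Filter.atTop (nhds 1) := by
  have hstep (n : ℕ) (hn : 1 ≤ n) :
      (n : ℝ) * μ (n + 1) = exp (-(n : ℝ) ^ α) - exp (-((n : ℝ) + 1) ^ α) := by
    rw [← hrel n hn, ← Nat.cast_succ, ← hrel (n + 1) (by omega)]
    exact (tsum_nat_add_sub_tsum_nat_add_succ (a := fun k ↦ (k : ℝ) * μ (k + 1)) (hsum n hn)).symm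
  have hbounds (n : ℕ) (hn : 1 ≤ n) :=
    rpow_le_neg_log_le_of_mul_eq hα0 hα1.le (Nat.one_le_cast.mpr hn) (hstep n hn)
  have hupper := (tendsto_rpow_add_log_div_rpow hα0 2 (-log α)).comp
    (tendsto_atTop_add_const_right _ 1 tendsto_natCast_atTop_atTop)
  rw [← tendsto_add_atTop_iff_nat 1]
  refine tendsto_of_tendsto_of_tendsto_of_le_of_le' (tendsto_natCast_rpow_div_add_one_rpow α)
    hupper ?_ ?_ <;> filter_upwards [eventually_ge_atTop 1] with n hn <;>
    rw [Nat.cast_succ, div_neg, ← neg_div]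
  · exact div_le_div_of_nonneg_right (hbounds n hn).1 (by positivity)
  · refine div_le_div_of_nonneg_right ?_ (by positivity)
    linarith [(hbounds n hn).2]

/-- If `0 < α < 1` and the nonnegative numbers `μ n` satisfy
`n μ_{n+1} + (n+1) μ_{n+2} + ⋯ = exp (-n^α)` for all `n ≥ 1`,
then `ln μ_n ∼ -n^α` as `n → ∞`. -/
theorem stmt_7 (α : ℝ) (hα0 : 0 < α) (hα1 : α < 1) (μ : ℕ → ℝ)
    (hμ0 : ∀ n, 0 ≤ μ n)
    (hsum : ∀ n : ℕ, 1 ≤ n → Summable (fun j : ℕ => ((n + j : ℕ) : ℝ) * μ (n + j + 1)))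
    (hrel : ∀ n : ℕ, 1 ≤ n →
      ∑' j : ℕ, ((n + j : ℕ) : ℝ) * μ (n + j + 1) = Real.exp (-(n : ℝ) ^ α)) :
    Filter.Tendsto (fun n : ℕ => Real.log (μ n) / (-(n : ℝ) ^ α))
      Filter.atTop (nhds 1) :=
  stmt_7_general α hα0 hα1 μ hsum hrel
end
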